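/- Evaluating the right-hand side of the smooth-fit equation at z_f = d gives ξ₁(β); precisely: (β/(θ₁(0)+θ₂(0)))·(ρ₁(d)/(θ₂(0)e^{θ₂(0)d}) + ρ₂(d)/(θ₁(0)e^{-θ₁(0)d})) = βu₀/r - β(e^{θ₁(u₀)d} + (θ₁(u₀)/θ₂(u₀))e^{-θ₂(u₀)d})/(θ₁(u₀)(e^{θ₁(u₀)d} - e^{-θ₂(u₀)d})), where ρ₁, ρ₂ are as defined. -/
import Mathlib


open Real Set

noncomputable def th1 (μ σ r u : ℝ) : ℝ := (Real.sqrt ((μ - u)^2 + 2*r*σ^2) + (μ - u)) / σ^2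
noncomputable def th2 (μ σ r u : ℝ) : ℝ := (Real.sqrt ((μ - u)^2 + 2*r*σ^2) - (μ - u)) / σ^2

noncomputable def rho1 (μ σ r u₀ z : ℝ) : ℝ :=
  ((th1 μ σ r 0 - th1 μ σ r u₀) * Real.exp ((th1 μ σ r u₀ + th2 μ σ r 0) * z)
    - (th1 μ σ r 0 + th2 μ σ r u₀) * Real.exp ((th2 μ σ r 0 - th2 μ σ r u₀) * z)) /
  (Real.exp (th1 μ σ r u₀ * z) - Real.exp (-(th2 μ σ r u₀) * z))

noncomputable def rho2 (μ σ r u₀ z : ℝ) : ℝ :=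
  ((th2 μ σ r 0 - th2 μ σ r u₀) * Real.exp (-(th1 μ σ r 0 + th2 μ σ r u₀) * z)
    - (th2 μ σ r 0 + th1 μ σ r u₀) * Real.exp ((th1 μ σ r u₀ - th1 μ σ r 0) * z)) /
  (Real.exp (th1 μ σ r u₀ * z) - Real.exp (-(th2 μ σ r u₀) * z))

lemma key_alg (a b c e E1 E2 B A U β : ℝ) (ha : a ≠ 0) (hb : b ≠ 0) (hc : c ≠ 0) (he : e ≠ 0)
    (hA : A ≠ 0) (hB : B ≠ 0) (habne : a + b ≠ 0) (hE : E1 - E2 ≠ 0)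
    (hce : a*b = c*e) (hU : a*b*U = a - b - c + e) :
    β/(a+b) * ( ((a-c)*(E1*B) - (a+e)*(B*E2))/(E1-E2)/(b*B)
      + ((b-e)*(A*E2) - (b+c)*(E1*A))/(E1-E2)/(a*A) )
    = β*U - β*(E1 + c/e*E2)/(c*(E1-E2)) := by
  have h1 : ((a-c)*(E1*B) - (a+e)*(B*E2))/(E1-E2)/(b*B)
      = ((a-c)*E1 - (a+e)*E2)/(b*(E1-E2)) := by field_simp
  have h2 : ((b-e)*(A*E2) - (b+c)*(E1*A))/(E1-E2)/(a*A)
      = ((b-e)*E2 - (b+c)*E1)/(a*(E1-E2)) := by field_simp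
  rw [h1, h2]
  have h3 : β/(a+b) * ( ((a-c)*E1 - (a+e)*E2)/(b*(E1-E2)) + ((b-e)*E2 - (b+c)*E1)/(a*(E1-E2)) )
      = β*((a-b-c)*E1 - (a-b+e)*E2)/(a*b*(E1-E2)) := by field_simp; ring
  rw [h3]
  have h4 : β*(E1 + c/e*E2)/(c*(E1-E2)) = β*(e*E1 + c*E2)/(a*b*(E1-E2)) := by
    rw [hce]; field_simp
  rw [h4]
  field_simp
  linear_combination (-β*(E1-E2))*hU

lemma sqrt_gt_abs (μ σ r u : ℝ) (hσ : 0 < σ) (hr : 0 < r) :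
    |μ - u| < Real.sqrt ((μ - u)^2 + 2*r*σ^2) := by
  rw [← Real.sqrt_sq_eq_abs]
  exact Real.sqrt_lt_sqrt (sq_nonneg _) (by nlinarith [mul_pos hr (pow_pos hσ 2)])

lemma th1_pos (μ σ r u : ℝ) (hσ : 0 < σ) (hr : 0 < r) : 0 < th1 μ σ r u := by
  have h := sqrt_gt_abs μ σ r u hσ hr
  have h2 := neg_abs_le (μ - u)
  unfold th1
  apply div_pos (by linarith) (by positivity)

lemma th2_pos (μ σ r u : ℝ) (hσ : 0 < σ) (hr : 0 < r) : 0 < th2 μ σ r u := by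
  have h := sqrt_gt_abs μ σ r u hσ hr
  have h2 := le_abs_self (μ - u)
  unfold th2
  apply div_pos (by linarith) (by positivity)

lemma th_mul (μ σ r u : ℝ) (hσ : 0 < σ) (hr : 0 < r) :
    th1 μ σ r u * th2 μ σ r u = 2*r/σ^2 := by
  have hs : Real.sqrt ((μ - u)^2 + 2*r*σ^2) ^ 2 = (μ - u)^2 + 2*r*σ^2 :=
    Real.sq_sqrt (by positivity)
  unfold th1 th2
  have hσ2 : σ^2 ≠ 0 := by positivity
  field_simp
  nlinarith [hs]

lemma th_sub (μ σ r u : ℝ) : th1 μ σ r u - th2 μ σ r u = 2*(μ - u)/σ^2 := by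
  unfold th1 th2; ring

theorem stmt15 (μ σ r d u₀ β : ℝ) (hσ : 0 < σ) (hr : 0 < r) (hd : 0 < d) (hu₀ : 0 < u₀)
    (hβ : 0 < β) :
    β / (th1 μ σ r 0 + th2 μ σ r 0) *
      (rho1 μ σ r u₀ d / (th2 μ σ r 0 * Real.exp (th2 μ σ r 0 * d))
        + rho2 μ σ r u₀ d / (th1 μ σ r 0 * Real.exp (-(th1 μ σ r 0) * d))) =
    β * u₀ / r - β * (Real.exp (th1 μ σ r u₀ * d) + th1 μ σ r u₀ / th2 μ σ r u₀ * Real.exp (-(th2 μ σ r u₀) * d)) /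
      (th1 μ σ r u₀ * (Real.exp (th1 μ σ r u₀ * d) - Real.exp (-(th2 μ σ r u₀) * d))) := by
  set a := th1 μ σ r 0 with ha_def
  set b := th2 μ σ r 0 with hb_def
  set c := th1 μ σ r u₀ with hc_def
  set e := th2 μ σ r u₀ with he_def
  have hap : 0 < a := th1_pos μ σ r 0 hσ hr
  have hbp : 0 < b := th2_pos μ σ r 0 hσ hr
  have hcp : 0 < c := th1_pos μ σ r u₀ hσ hr
  have hep : 0 < e := th2_pos μ σ r u₀ hσ hr
  have hce : a * b = c * e := by
    rw [ha_def, hb_def, hc_def, he_def, th_mul μ σ r 0 hσ hr, th_mul μ σ r u₀ hσ hr]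
  have hsub0 : a - b = 2*(μ - 0)/σ^2 := th_sub μ σ r 0
  have hsubu : c - e = 2*(μ - u₀)/σ^2 := th_sub μ σ r u₀
  have hab2r : a * b = 2*r/σ^2 := by rw [ha_def, hb_def]; exact th_mul μ σ r 0 hσ hr
  have hU : a * b * (u₀/r) = a - b - c + e := by
    rw [hab2r]
    have h1 : 2*r/σ^2 * (u₀/r) = 2*u₀/σ^2 := by field_simp
    rw [h1]
    have h2 : a - b - c + e = (a - b) - (c - e) := by ring
    rw [h2, hsub0, hsubu]
    field_simp
    ring
  have hE : Real.exp (c * d) - Real.exp (-e * d) ≠ 0 := by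
    have : Real.exp (-e * d) < Real.exp (c * d) :=
      Real.exp_lt_exp.mpr (by nlinarith)
    exact sub_ne_zero.mpr (ne_of_gt this)
  have hkey := key_alg a b c e (Real.exp (c*d)) (Real.exp (-e*d)) (Real.exp (b*d))
    (Real.exp (-a*d)) (u₀/r) β hap.ne' hbp.ne' hcp.ne' hep.ne'
    (Real.exp_ne_zero _) (Real.exp_ne_zero _) (by positivity) hE hce hU
  rw [rho1, rho2]
  rw [show (c + b) * d = c*d + b*d by ring, show (b - e) * d = b*d + -e*d by ring,
      show -(a + e) * d = -a*d + -e*d by ring, show (c - a) * d = c*d + -a*d by ring]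
  simp only [Real.exp_add]
  rw [show -(e) * d = -e*d by ring, show -(a) * d = -a*d by ring] at *
  rw [hkey]
  ring
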